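/- arXiv:1707.06576 — 2 statements merged into one kernel-verified Lean document; each statement's English description precedes it below -/
import Mathlib

section
/- Let λ > 0, a > 0, and v ∈ ℝⁿ, and let ∇₊(v) ∈ ℝⁿ denote the componentwise positive part, (∇₊(v))_i = max{0, v_i}. Then a vector x̄ ∈ ℝⁿ with x̄ ≥ 0 is a global minimizer over {x ∈ ℝⁿ : x ≥ 0} of x ↦ ‖x − v‖₂² + λ P_a(x) if and only if x̄ is a global minimizer over all of ℝⁿ of x ↦ ‖x − ∇₊(v)‖₂² + λ P_a(x). -/
open Matrix Filter Topology

noncomputable def rho (a t : ℝ) : ℝ := a * |t| / (a * |t| + 1)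

noncomputable def Pa {n : ℕ} (a : ℝ) (x : Fin n → ℝ) : ℝ := ∑ i, rho a (x i)

open scoped Classical in
noncomputable def l0 {n : ℕ} (x : Fin n → ℝ) : ℕ :=
  (Finset.univ.filter fun i => x i ≠ 0).card

def SOL {m n : ℕ} (A : Matrix (Fin m) (Fin n) ℝ) (b : Fin m → ℝ) : Set (Fin n → ℝ) :=
  {x | A.mulVec x = b ∧ 0 ≤ x}

noncomputable def sqN {n : ℕ} (v : Fin n → ℝ) : ℝ := ∑ i, (v i) ^ 2

def projPos {n : ℕ} (v : Fin n → ℝ) : Fin n → ℝ := fun i => max 0 (v i)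

noncomputable def C1 {m n : ℕ} (A : Matrix (Fin m) (Fin n) ℝ) (b : Fin m → ℝ)
    (lam a : ℝ) (x : Fin n → ℝ) : ℝ :=
  sqN (A.mulVec x - b) + lam * Pa a x

noncomputable def C2 {m n : ℕ} (A : Matrix (Fin m) (Fin n) ℝ) (b : Fin m → ℝ)
    (lam a mu : ℝ) (x z : Fin n → ℝ) : ℝ :=
  mu * (C1 A b lam a x - sqN (A.mulVec x - A.mulVec z)) + sqN (x - z)

noncomputable def Bmu {m n : ℕ} (A : Matrix (Fin m) (Fin n) ℝ) (b : Fin m → ℝ)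
    (mu : ℝ) (z : Fin n → ℝ) : Fin n → ℝ :=
  z + mu • (Aᵀ.mulVec (b - A.mulVec z))

lemma rho_nonneg' (a t : ℝ) (ha : 0 < a) : 0 ≤ rho a t := by
  have h1 : 0 ≤ a * |t| := mul_nonneg ha.le (abs_nonneg t)
  exact div_nonneg h1 (by linarith)

lemma rho_zero (a : ℝ) : rho a 0 = 0 := by simp [rho]

lemma rho_projPos_le (a t : ℝ) (ha : 0 < a) : rho a (max 0 t) ≤ rho a t := by
  rcases le_total 0 t with h | h
  · rw [max_eq_right h]
  · rw [max_eq_left h, rho_zero]; exact rho_nonneg' a t ha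

theorem stmt12 {n : ℕ} (lam a : ℝ) (hl : 0 < lam) (ha : 0 < a)
    (v : Fin n → ℝ) (xbar : Fin n → ℝ) (hxbar : 0 ≤ xbar) :
    (∀ x : Fin n → ℝ, 0 ≤ x →
        sqN (xbar - v) + lam * Pa a xbar ≤ sqN (x - v) + lam * Pa a x) ↔
    (∀ x : Fin n → ℝ,
        sqN (xbar - projPos v) + lam * Pa a xbar ≤ sqN (x - projPos v) + lam * Pa a x) := by
  classical
  set w : Fin n → ℝ := fun i => max 0 (-(v i)) with hwdef
  have hwnn : ∀ i, 0 ≤ w i := fun i => le_max_left _ _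
  have objsum : ∀ (c x : Fin n → ℝ), sqN (x - c) + lam * Pa a x
      = ∑ i, ((x i - c i) ^ 2 + lam * rho a (x i)) := by
    intro c x
    unfold sqN Pa
    rw [Finset.mul_sum, ← Finset.sum_add_distrib]
    simp
  have key : ∀ s t : ℝ, (s - t) ^ 2
      = (s - max 0 t) ^ 2 + 2 * (s * max 0 (-t)) + (max 0 (-t)) ^ 2 := by
    intro s t
    rcases le_total 0 t with h | h
    · rw [max_eq_right h, max_eq_left (by linarith : -t ≤ 0)]; ring
    · rw [max_eq_left h, max_eq_right (by linarith : (0:ℝ) ≤ -t)]; ring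
  have decomp : ∀ x : Fin n → ℝ, sqN (x - v) + lam * Pa a x
      = (sqN (x - projPos v) + lam * Pa a x) + 2 * (∑ i, x i * w i) + sqN w := by
    intro x
    rw [objsum, objsum]
    unfold sqN
    rw [Finset.mul_sum, ← Finset.sum_add_distrib, ← Finset.sum_add_distrib]
    apply Finset.sum_congr rfl
    intro i _
    have := key (x i) (v i)
    simp only [projPos, hwdef]
    linarith
  have zeroing : ∀ (c z : Fin n → ℝ) (i : Fin n),
      sqN (Function.update z i 0 - c) + lam * Pa a (Function.update z i 0)
        = (sqN (z - c) + lam * Pa a z) - ((z i - c i) ^ 2 + lam * rho a (z i)) + (c i) ^ 2 := by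
    intro c z i
    rw [objsum, objsum]
    have hfun : (fun j => ((Function.update z i 0 : Fin n → ℝ) j - c j) ^ 2
          + lam * rho a ((Function.update z i 0 : Fin n → ℝ) j))
        = Function.update (fun j => (z j - c j) ^ 2 + lam * rho a (z j)) i ((c i) ^ 2) := by
      funext j
      rcases eq_or_ne j i with rfl | hj
      · simp [rho_zero]
      · simp [Function.update_of_ne hj]
    rw [hfun]
    rw [Finset.sum_update_of_mem (Finset.mem_univ i), Finset.sdiff_singleton_eq_erase]
    rw [← Finset.add_sum_erase _ _ (Finset.mem_univ i)]
    ring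
  have extract : ∀ (c : Fin n → ℝ) (i : Fin n), c i ≤ 0 →
      sqN (xbar - c) + lam * Pa a xbar
        ≤ sqN (Function.update xbar i 0 - c) + lam * Pa a (Function.update xbar i 0) →
      xbar i = 0 := by
    intro c i hci hmin
    rw [zeroing] at hmin
    have h1 : (xbar i - c i) ^ 2 + lam * rho a (xbar i) ≤ (c i) ^ 2 := by linarith
    have h2 : 0 ≤ lam * rho a (xbar i) := mul_nonneg hl.le (rho_nonneg' a _ ha)
    have h3 : 0 ≤ xbar i := hxbar i
    have h4 : 0 ≤ xbar i * (-c i) := mul_nonneg h3 (by linarith)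
    have h5 : xbar i ≤ 0 := by nlinarith
    linarith
  have hsum0 : ∀ z : Fin n → ℝ, (∀ i, v i < 0 → z i = 0) → ∑ i, z i * w i = 0 := by
    intro z hz
    apply Finset.sum_eq_zero
    intro i _
    rcases lt_or_ge (v i) 0 with hvi | hvi
    · rw [hz i hvi]; ring
    · have : w i = 0 := max_eq_left (by simpa using hvi)
      rw [this]; ring
  constructor
  · intro h x
    have hz : ∀ i, v i < 0 → xbar i = 0 := by
      intro i hvi
      apply extract v i hvi.le
      apply h
      intro j
      rcases eq_or_ne j i with rfl | hj
      · simp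
      · simpa [Function.update_of_ne hj] using hxbar j
    have hs0 := hsum0 xbar hz
    set y : Fin n → ℝ := fun i => if v i < 0 then 0 else max 0 (x i) with hy
    have hy0 : (0 : Fin n → ℝ) ≤ y := by
      intro i
      simp only [hy, Pi.zero_apply]
      split
      · exact le_refl 0
      · exact le_max_left _ _
    have hcompare : sqN (y - v) + lam * Pa a y
        ≤ (sqN (x - projPos v) + lam * Pa a x) + sqN w := by
      rw [objsum, objsum]
      unfold sqN
      rw [← Finset.sum_add_distrib]
      apply Finset.sum_le_sum
      intro i _
      simp only [hy, projPos, hwdef]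
      rcases lt_or_ge (v i) 0 with hvi | hvi
      · rw [if_pos hvi, max_eq_left hvi.le, max_eq_right (by linarith : (0:ℝ) ≤ -v i), rho_zero]
        have h2 : 0 ≤ lam * rho a (x i) := mul_nonneg hl.le (rho_nonneg' a _ ha)
        nlinarith [sq_nonneg (x i)]
      · rw [if_neg (not_lt.mpr hvi), max_eq_right hvi,
          max_eq_left (by linarith : -v i ≤ 0)]
        have hrle := rho_projPos_le a (x i) ha
        have hs : (max 0 (x i) - v i) ^ 2 ≤ (x i - v i) ^ 2 := by
          rcases le_total 0 (x i) with hx | hx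
          · rw [max_eq_right hx]
          · rw [max_eq_left hx]; nlinarith
        nlinarith
    have h1 := h y hy0
    have hd := decomp xbar
    rw [hs0] at hd
    linarith
  · intro h x hx0
    have hz : ∀ i, v i < 0 → xbar i = 0 := by
      intro i hvi
      apply extract (projPos v) i (le_of_eq (by simp [projPos, max_eq_left hvi.le]))
      apply h
    have hs0 := hsum0 xbar hz
    have hxw : 0 ≤ ∑ i, x i * w i :=
      Finset.sum_nonneg fun i _ => mul_nonneg (hx0 i) (hwnn i)
    have hdx := decomp x
    have hdb := decomp xbar
    rw [hs0] at hdb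
    have := h x
    linarith
end

section
/- Let A be a real m × n matrix, b ∈ ℝᵐ, λ > 0, a > 0, and 0 < μ < 1/‖A‖₂². Define C₁(x) = ‖Ax − b‖₂² + λ P_a(x), C₂(x, z) = μ(C₁(x) − ‖Ax − Az‖₂²) + ‖x − z‖₂², and let (x^k) be a sequence of nonnegative vectors such that for each k, x^{k+1} is a global minimizer of C₂(·, x^k) over {x ∈ ℝⁿ : x ≥ 0}. Then for every k, C₁(x^{k+1}) ≤ C₁(x^k) − (1/μ)‖x^{k+1} − x^k‖₂² + ‖A(x^{k+1} − x^k)‖₂² ≤ C₁(x^k); in particular, the sequence (C₁(x^k)) is nonincreasing. -/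
open Matrix Filter Topology

/-
The surrogate `C2 · z` majorizes `mu • C1` up to the term `‖x - z‖² - mu ‖A(x - z)‖²` and touches
it at `x = z`. Comparing the minimizer `x^{k+1}` of `C2 · x^k` with the feasible point `x^k` gives
the first inequality; the second is `‖A v‖² ≤ ‖A‖² ‖v‖² ≤ ‖v‖² / mu`.
-/

section SquaredNorm

open scoped Matrix.Norms.L2Operator

variable {m n : ℕ}

lemma sqN_eq_norm_sq (v : Fin n → ℝ) : sqN v = ‖WithLp.toLp 2 v‖ ^ 2 := by
  rw [EuclideanSpace.norm_eq, Real.sq_sqrt (by positivity)]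
  simp [sqN, sq_abs]

lemma sqN_nonneg (v : Fin n → ℝ) : 0 ≤ sqN v := by
  unfold sqN; positivity

lemma sqN_mulVec_le (A : Matrix (Fin m) (Fin n) ℝ) (v : Fin n → ℝ) :
    sqN (A *ᵥ v) ≤ ‖A‖ ^ 2 * sqN v := by
  rw [sqN_eq_norm_sq, sqN_eq_norm_sq, ← mul_pow]
  exact pow_le_pow_left₀ (norm_nonneg _) (A.l2_opNorm_mulVec (WithLp.toLp 2 v)) 2

lemma sqN_mulVec_le_inv_mul {A : Matrix (Fin m) (Fin n) ℝ} {mu : ℝ} (hmu : 0 < mu)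
    (hmuA : mu ≤ 1 / ‖A‖ ^ 2) (v : Fin n → ℝ) :
    sqN (A *ᵥ v) ≤ 1 / mu * sqN v := by
  have hA : ‖A‖ ^ 2 ≤ 1 / mu := by
    rcases (sq_nonneg ‖A‖).eq_or_lt with hA | hA
    · rw [← hA]; positivity
    · rw [le_div_iff₀ hA] at hmuA
      rw [le_div_iff₀ hmu]
      linarith
  exact (sqN_mulVec_le A v).trans (mul_le_mul_of_nonneg_right hA (sqN_nonneg v))

end SquaredNorm

section Surrogate

variable {m n : ℕ} (A : Matrix (Fin m) (Fin n) ℝ) (b : Fin m → ℝ) (lam a : ℝ)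

lemma C2_self (mu : ℝ) (z : Fin n → ℝ) : C2 A b lam a mu z z = mu * C1 A b lam a z := by
  simp [C2, sqN]

lemma C1_le_of_C2_le_C2_self {mu : ℝ} (hmu : 0 < mu) {x z : Fin n → ℝ}
    (h : C2 A b lam a mu x z ≤ C2 A b lam a mu z z) :
    C1 A b lam a x ≤ C1 A b lam a z - 1 / mu * sqN (x - z) + sqN (A *ᵥ (x - z)) := by
  rw [C2_self, C2, ← mulVec_sub] at h
  refine le_of_mul_le_mul_left ?_ hmu
  have hexpand : mu * (C1 A b lam a z - 1 / mu * sqN (x - z) + sqN (A *ᵥ (x - z)))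
      = mu * C1 A b lam a z - sqN (x - z) + mu * sqN (A *ᵥ (x - z)) := by
    field_simp
  linarith

end Surrogate

open scoped Matrix.Norms.L2Operator in
theorem stmt17_general {m n : ℕ} (A : Matrix (Fin m) (Fin n) ℝ) (b : Fin m → ℝ)
    (lam a mu : ℝ)
    (hmu : 0 < mu) (hmu2 : mu < 1 / ‖A‖ ^ 2)
    (xseq : ℕ → (Fin n → ℝ)) (hpos : ∀ k, 0 ≤ xseq k)
    (hstep : ∀ k, ∀ y : Fin n → ℝ, 0 ≤ y →
      C2 A b lam a mu (xseq (k + 1)) (xseq k) ≤ C2 A b lam a mu y (xseq k)) :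
    (∀ k : ℕ,
      C1 A b lam a (xseq (k + 1)) ≤
        C1 A b lam a (xseq k) - (1 / mu) * sqN (xseq (k + 1) - xseq k)
          + sqN (A.mulVec (xseq (k + 1) - xseq k)) ∧
      C1 A b lam a (xseq k) - (1 / mu) * sqN (xseq (k + 1) - xseq k)
          + sqN (A.mulVec (xseq (k + 1) - xseq k)) ≤ C1 A b lam a (xseq k)) ∧
    Antitone (fun k => C1 A b lam a (xseq k)) := by
  have descent : ∀ k : ℕ,
      C1 A b lam a (xseq (k + 1)) ≤
        C1 A b lam a (xseq k) - (1 / mu) * sqN (xseq (k + 1) - xseq k)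
          + sqN (A.mulVec (xseq (k + 1) - xseq k)) ∧
      C1 A b lam a (xseq k) - (1 / mu) * sqN (xseq (k + 1) - xseq k)
          + sqN (A.mulVec (xseq (k + 1) - xseq k)) ≤ C1 A b lam a (xseq k) := fun k =>
    ⟨C1_le_of_C2_le_C2_self A b lam a hmu (hstep k (xseq k) (hpos k)), by
      linarith [sqN_mulVec_le_inv_mul hmu hmu2.le (xseq (k + 1) - xseq k)]⟩
  exact ⟨descent, antitone_nat_of_succ_le fun k => (descent k).1.trans (descent k).2⟩

open scoped Matrix.Norms.L2Operator in
theorem stmt17 {m n : ℕ} (A : Matrix (Fin m) (Fin n) ℝ) (b : Fin m → ℝ)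
    (lam a mu : ℝ) (hl : 0 < lam) (ha : 0 < a)
    (hmu : 0 < mu) (hmu2 : mu < 1 / ‖A‖ ^ 2)
    (xseq : ℕ → (Fin n → ℝ)) (hpos : ∀ k, 0 ≤ xseq k)
    (hstep : ∀ k, ∀ y : Fin n → ℝ, 0 ≤ y →
      C2 A b lam a mu (xseq (k + 1)) (xseq k) ≤ C2 A b lam a mu y (xseq k)) :
    (∀ k : ℕ,
      C1 A b lam a (xseq (k + 1)) ≤
        C1 A b lam a (xseq k) - (1 / mu) * sqN (xseq (k + 1) - xseq k)
          + sqN (A.mulVec (xseq (k + 1) - xseq k)) ∧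
      C1 A b lam a (xseq k) - (1 / mu) * sqN (xseq (k + 1) - xseq k)
          + sqN (A.mulVec (xseq (k + 1) - xseq k)) ≤ C1 A b lam a (xseq k)) ∧
    Antitone (fun k => C1 A b lam a (xseq k)) :=
  stmt17_general A b lam a mu hmu hmu2 xseq hpos hstep
end
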